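/- Let P be a convex polytope with ℓ nonconstant on edges, satisfying the Irreducibility Assumption (F^-(v) and F^+(v) are faces of P for every vertex v). Then O^- is a stratification if and only if for every vertex v the face F^-(v) has no incoming directed edges (i.e., there is no edge u → u' with u' ∈ F^-(v) and u ∉ F^-(v)). -/

import Mathlib

open Set

variable {V : Type*} [NormedAddCommGroup V] [NormedSpace ℝ V]

/-- A (nonempty) convex polytope: the convex hull of a nonempty finite set of points. -/
def IsPolytope (P : Set V) : Prop :=
  ∃ s : Finset V, s.Nonempty ∧ P = convexHull ℝ (s : Set V)

/-- A (nonempty exposed) face of a polytope. -/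
def IsFace (P F : Set V) : Prop :=
  F.Nonempty ∧ IsExposed ℝ P F

/-- A vertex of a polytope: a point whose singleton is a face. -/
def IsVertex (P : Set V) (v : V) : Prop := IsFace P {v}

/-- An edge of a polytope: a face which is a nondegenerate segment. -/
def IsEdge (P : Set V) (v w : V) : Prop := v ≠ w ∧ IsFace P (segment ℝ v w)

/-- `ℓ` attains its maximum on `G` at `v`. -/
def MaxAt (ℓ : V →L[ℝ] ℝ) (G : Set V) (v : V) : Prop := v ∈ G ∧ ∀ x ∈ G, ℓ x ≤ ℓ v

/-- `ℓ` attains its minimum on `G` at `v`. -/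
def MinAt (ℓ : V →L[ℝ] ℝ) (G : Set V) (v : V) : Prop := v ∈ G ∧ ∀ x ∈ G, ℓ v ≤ ℓ x

/-- `ℓ` is nonconstant on every edge of `P`. -/
def NonconstOnEdges (P : Set V) (ℓ : V →L[ℝ] ℝ) : Prop :=
  ∀ v w, IsEdge P v w → ℓ v ≠ ℓ w

/-- Directed edge: an edge oriented by increasing `ℓ`. -/
def DirEdge (P : Set V) (ℓ : V →L[ℝ] ℝ) (v w : V) : Prop := IsEdge P v w ∧ ℓ v < ℓ w

/-- The witness relation `O(v,w)`: some face of `P` has ℓ-minimum at `v` and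
ℓ-maximum at `w`. -/
def ORel (P : Set V) (ℓ : V →L[ℝ] ℝ) (v w : V) : Prop :=
  ∃ G, IsFace P G ∧ MinAt ℓ G v ∧ MaxAt ℓ G w

/-- `O⁻(v)`: the union of relative interiors of faces of `P` on which `ℓ` attains
its maximum at `v`. -/
def Oneg (P : Set V) (ℓ : V →L[ℝ] ℝ) (v : V) : Set V :=
  ⋃ G ∈ {G : Set V | IsFace P G ∧ MaxAt ℓ G v}, intrinsicInterior ℝ G

/-- `O⁺(v)`: the union of relative interiors of faces of `P` on which `ℓ` attains
its minimum at `v`. -/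
def Opos (P : Set V) (ℓ : V →L[ℝ] ℝ) (v : V) : Set V :=
  ⋃ G ∈ {G : Set V | IsFace P G ∧ MinAt ℓ G v}, intrinsicInterior ℝ G

/-- `F⁻(v)`: the closure of `O⁻(v)`. -/
def Fneg (P : Set V) (ℓ : V →L[ℝ] ℝ) (v : V) : Set V := closure (Oneg P ℓ v)

/-- `F⁺(v)`: the closure of `O⁺(v)`. -/
def Fpos (P : Set V) (ℓ : V →L[ℝ] ℝ) (v : V) : Set V := closure (Opos P ℓ v)

/-- The partition `O⁻` is a stratification. -/
def StratNeg (P : Set V) (ℓ : V →L[ℝ] ℝ) : Prop :=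
  ∀ u w : V, IsVertex P u → IsVertex P w →
    (Oneg P ℓ u ∩ Fneg P ℓ w).Nonempty → Oneg P ℓ u ⊆ Fneg P ℓ w

/-- The dimension of a subset of `V` (dimension of its affine span). -/
noncomputable def dimS (F : Set V) : ℕ := Module.finrank ℝ (vectorSpan ℝ F)

/-! If `O⁻` is a stratification and `u → u'` enters `F⁻(v)`, then `O⁻(u')` meets `F⁻(v)` at the
vertex `u'`, so it lies in `F⁻(v)`; it contains the open edge `(u, u')`, whose closure reaches
`u`. Conversely, if a point of `O⁻(u)` lies in the face `F⁻(w)`, the face carrying it in its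
relative interior lies in `F⁻(w)`, so `u ∈ F⁻(w)`. Any face `G` on which `ℓ` is maximal at `u` then
lies in `F⁻(w)`: otherwise the `ℓ`-highest vertex of `G` outside `F⁻(w)` lies strictly below `u`
(`ℓ` is constant on no edge, so its maximum on a face is unique), and the simplex-method step gives
it an `ℓ`-increasing edge of `G`, an incoming edge of `F⁻(w)`. -/

theorem map_le_of_mem_convexHull {t : Set V} {f : V →L[ℝ] ℝ} {c : ℝ} (h : ∀ z ∈ t, f z ≤ c)
    {x : V} (hx : x ∈ convexHull ℝ t) : f x ≤ c :=
  convexHull_min h (convex_halfSpace_le f.isLinear c) hx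

theorem exists_mem_lt_of_mem_convexHull {t : Set V} {f : V →L[ℝ] ℝ} {x w : V}
    (hw : w ∈ convexHull ℝ t) (hlt : f x < f w) : ∃ z ∈ t, f x < f z := by
  by_contra! h
  exact hlt.not_ge (map_le_of_mem_convexHull h hw)

theorem SeparatingDual.exists_lt_of_ne {x y : V} (h : x ≠ y) : ∃ f : V →L[ℝ] ℝ, f x < f y := by
  obtain ⟨f, hf⟩ := SeparatingDual.exists_separating_of_ne (R := ℝ) h
  rcases hf.lt_or_gt with hlt | hgt
  · exact ⟨f, hlt⟩
  · exact ⟨-f, by simpa using hgt⟩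

theorem ContinuousLinearMap.map_lineMap (φ : V →L[ℝ] ℝ) (a b : V) (θ : ℝ) :
    φ (AffineMap.lineMap a b θ) = φ a + θ * (φ b - φ a) := by
  rw [AffineMap.lineMap_apply_module, map_add, map_smul, map_smul, smul_eq_mul, smul_eq_mul]
  ring

theorem convexHull_filter_eq {t : Finset V} {f : V →L[ℝ] ℝ} {c : ℝ} (hle : ∀ z ∈ t, f z ≤ c) :
    convexHull ℝ ↑(t.filter (f · = c)) = {x ∈ convexHull ℝ ↑t | f x = c} := by
  refine Subset.antisymm (convexHull_min (fun z hz => ?_) ?_) ?_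
  · rw [Finset.coe_filter] at hz
    exact ⟨subset_convexHull ℝ _ hz.1, hz.2⟩
  · exact (convex_convexHull ℝ _).inter (convex_hyperplane f.isLinear c)
  rintro _ ⟨hx, hfx⟩
  rw [Finset.convexHull_eq] at hx ⊢
  obtain ⟨w, hw0, hw1, rfl⟩ := hx
  have hsum : ∑ y ∈ t, w y * (c - f y) = 0 := by
    have hf : f (t.centerMass w id) = ∑ y ∈ t, w y * f y := by
      simp [Finset.centerMass_eq_of_sum_1 _ _ hw1, map_sum]
    simp only [mul_sub, Finset.sum_sub_distrib, ← Finset.sum_mul, hw1, ← hf, hfx]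
    ring
  have hzero : ∀ z ∈ t, z ∉ t.filter (f · = c) → w z = 0 := fun z hz hzc => by
    have hz0 := (Finset.sum_eq_zero_iff_of_nonneg fun y hy =>
      mul_nonneg (hw0 y hy) (sub_nonneg.2 (hle y hy))).1 hsum z hz
    have hfz : c - f z ≠ 0 := sub_ne_zero.2 fun h => hzc (Finset.mem_filter.2 ⟨hz, h.symm⟩)
    simpa [hfz] using hz0
  refine ⟨w, fun z hz => hw0 z (Finset.mem_of_mem_filter z hz), ?_, ?_⟩
  · rwa [Finset.sum_subset (Finset.filter_subset _ _) hzero]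
  · exact Finset.centerMass_subset id (Finset.filter_subset _ _) hzero

theorem isFace_convexHull_filter {t : Finset V} {f : V →L[ℝ] ℝ} {c : ℝ}
    (hle : ∀ z ∈ t, f z ≤ c) (hc : ∃ z ∈ t, f z = c) :
    IsFace (convexHull ℝ ↑t) (convexHull ℝ (↑(t.filter (f · = c)) : Set V)) := by
  obtain ⟨z, hzt, hzc⟩ := hc
  rw [convexHull_filter_eq hle]
  refine ⟨⟨z, subset_convexHull ℝ _ hzt, hzc⟩, fun _ => ⟨f, ?_⟩⟩
  ext x
  refine and_congr_right fun hx => ⟨fun hfx y hy => hfx ▸ map_le_of_mem_convexHull hle hy,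
    fun hmax => le_antisymm (map_le_of_mem_convexHull hle hx) ?_⟩
  exact hzc ▸ hmax z (subset_convexHull ℝ _ hzt)

theorem IsFace.exists_eq_slice {t : Finset V} {F : Set V} (hF : IsFace (convexHull ℝ ↑t) F) :
    ∃ (l : V →L[ℝ] ℝ) (c : ℝ), (∀ z ∈ t, l z ≤ c) ∧ F = {x ∈ convexHull ℝ ↑t | l x = c} := by
  obtain ⟨x₀, hx₀⟩ := hF.1
  obtain ⟨l, rfl⟩ := hF.2 hF.1
  refine ⟨l, l x₀, fun z hz => hx₀.2 z (subset_convexHull ℝ _ hz), ?_⟩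
  ext x
  exact and_congr_right fun hx => ⟨fun hmax => le_antisymm (hx₀.2 x hx) (hmax x₀ hx₀.1),
    fun hlx y hy => hlx ▸ hx₀.2 y hy⟩

theorem IsFace.exists_subset_eq_convexHull {t : Finset V} {F : Set V}
    (hF : IsFace (convexHull ℝ ↑t) F) : ∃ t' ⊆ t, F = convexHull ℝ ↑t' := by
  obtain ⟨l, c, hle, rfl⟩ := hF.exists_eq_slice
  exact ⟨_, Finset.filter_subset _ _, (convexHull_filter_eq hle).symm⟩

/-- Tilt the functional exposing the inner face by a large multiple of the one exposing the outer
face. -/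
theorem IsFace.trans {t : Finset V} {F B : Set V} (hF : IsFace (convexHull ℝ ↑t) F)
    (hB : IsFace F B) : IsFace (convexHull ℝ ↑t) B := by
  obtain ⟨l, c, hlc, rfl⟩ := hF.exists_eq_slice
  rw [← convexHull_filter_eq hlc] at hB
  obtain ⟨f, d, hfd, rfl⟩ := hB.exists_eq_slice
  obtain ⟨N, hN⟩ : ∃ N : ℝ, ∀ z ∈ t, l z < c → f z - d < N * (c - l z) := by
    refine ((Filter.eventually_all_finset t).2 fun z _ => ?_).exists (f := Filter.atTop)
    by_cases hz : l z < c
    · exact (Filter.eventually_gt_atTop ((f z - d) / (c - l z))).mono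
        fun N hN _ => (div_lt_iff₀ (sub_pos.2 hz)).1 hN
    · exact Filter.Eventually.of_forall fun _ h => absurd h hz
  set ψ : V →L[ℝ] ℝ := f + N • l
  have hψ : ∀ z ∈ t, ψ z = f z + N * l z := fun z _ => by simp [ψ]
  have hψle : ∀ z ∈ t, ψ z ≤ d + N * c := fun z hz => by
    rcases (hlc z hz).lt_or_eq with hlt | heq
    · linarith [hN z hz hlt, hψ z hz]
    · rw [hψ z hz, heq]
      linarith [hfd z (Finset.mem_filter.2 ⟨hz, heq⟩)]
  have hψeq : ∀ z ∈ t, ψ z = d + N * c ↔ l z = c ∧ f z = d := fun z hz => by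
    rcases (hlc z hz).lt_or_eq with hlt | heq
    · exact iff_of_false (by linarith [hN z hz hlt, hψ z hz]) fun h => hlt.ne h.1
    · simp only [hψ z hz, heq, true_and]
      constructor <;> intro h <;> linarith
  have hfilter : (t.filter (l · = c)).filter (f · = d) = t.filter (ψ · = d + N * c) := by
    rw [Finset.filter_filter]
    exact Finset.filter_congr fun z hz => (hψeq z hz).symm
  have hne := hB.1
  rw [← convexHull_filter_eq hfd, hfilter] at hne ⊢
  obtain ⟨z, hz⟩ := convexHull_nonempty_iff.1 hne
  exact isFace_convexHull_filter hψle ⟨z, Finset.mem_filter.1 hz⟩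

theorem isVertex_convexHull_iff {t : Finset V} {x : V} :
    IsVertex (convexHull ℝ ↑t) x ↔ x ∈ t ∧ ∃ h : V →L[ℝ] ℝ, ∀ z ∈ t, z ≠ x → h z < h x := by
  constructor
  · intro hx
    obtain ⟨h, c, hle, hxc⟩ := IsFace.exists_eq_slice hx
    have hx' : x ∈ {y ∈ convexHull ℝ ↑t | h y = c} := hxc ▸ mem_singleton x
    have heq : ∀ z ∈ t, h z = c → z = x := fun z hz hzc =>
      (hxc.symm ▸ ⟨subset_convexHull ℝ _ hz, hzc⟩ : z ∈ ({x} : Set V))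
    rw [← convexHull_filter_eq hle] at hxc
    obtain ⟨z, hz⟩ := convexHull_nonempty_iff.1 (hxc ▸ singleton_nonempty x)
    obtain ⟨hzt, hzc⟩ := Finset.mem_filter.1 hz
    refine ⟨heq z hzt hzc ▸ hzt, h, fun z hz hzx => ?_⟩
    exact hx'.2 ▸ (hle z hz).lt_of_ne fun hzc => hzx (heq z hz hzc)
  · rintro ⟨hxt, h, hh⟩
    have hle : ∀ z ∈ t, h z ≤ h x := fun z hz => by
      rcases eq_or_ne z x with rfl | hzx
      exacts [le_rfl, (hh z hz hzx).le]
    have hfilter : t.filter (h · = h x) = {x} := by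
      ext z
      simp only [Finset.mem_filter, Finset.mem_singleton]
      exact ⟨fun ⟨hz, hzx⟩ => by_contra fun hne => (hh z hz hne).ne hzx,
        by rintro rfl; exact ⟨hxt, rfl⟩⟩
    have := isFace_convexHull_filter hle ⟨x, hxt, rfl⟩
    rwa [hfilter, Finset.coe_singleton, convexHull_singleton] at this

/-- A point of `t` that is not a vertex lies in the hull of the others, since otherwise a separating
functional would expose it. -/
theorem exists_subset_forall_isVertex_convexHull_eq (t : Finset V) :
    ∃ t' ⊆ t, convexHull ℝ (t' : Set V) = convexHull ℝ ↑t ∧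
      ∀ x ∈ t', IsVertex (convexHull ℝ ↑t) x := by
  induction t using Finset.strongInduction with
  | H t ih =>
  by_cases hall : ∀ x ∈ t, IsVertex (convexHull ℝ ↑t) x
  · exact ⟨t, subset_rfl, rfl, hall⟩
  push Not at hall
  obtain ⟨z, hzt, hz⟩ := hall
  classical
  have hz_mem : z ∈ convexHull ℝ ↑(t.erase z) := by
    by_contra hnot
    obtain ⟨φ, u, hφ, hφz⟩ := geometric_hahn_banach_closed_point (convex_convexHull ℝ _)
      ((t.erase z).finite_toSet.isCompact_convexHull (𝕜 := ℝ)).isClosed hnot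
    refine hz (isVertex_convexHull_iff.2 ⟨hzt, φ, fun y hy hyz => ?_⟩)
    exact (hφ y (subset_convexHull ℝ _ (Finset.mem_erase.2 ⟨hyz, hy⟩))).trans hφz
  have hhull : convexHull ℝ ↑(t.erase z) = convexHull ℝ (↑t : Set V) := by
    refine (convexHull_mono (Finset.coe_subset.2 (Finset.erase_subset z t))).antisymm
      (convexHull_min (fun y hy => ?_) (convex_convexHull ℝ _))
    rcases eq_or_ne y z with rfl | hyz
    · exact hz_mem
    · exact subset_convexHull ℝ _ (Finset.mem_erase.2 ⟨hyz, hy⟩)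
  obtain ⟨t', ht', hhull', hvert⟩ := ih _ (Finset.erase_ssubset hzt)
  exact ⟨t', ht'.trans (Finset.erase_subset z t), hhull'.trans hhull, hhull ▸ hvert⟩

/-- Rotating the functional `h` that exposes `x` towards `φ` until it first hits a point of `t`
on which `φ` is larger than at `x`. -/
theorem exists_tilt {t : Finset V} {x : V} {h φ : V →L[ℝ] ℝ}
    (hh : ∀ z ∈ t, z ≠ x → h z < h x) (hφ : ∃ z ∈ t, φ x < φ z) :
    ∃ c : ℝ, 0 < c ∧ (∀ z ∈ t, h z + c * φ z ≤ h x + c * φ x) ∧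
      ∃ z ∈ t, h z + c * φ z = h x + c * φ x ∧ φ x < φ z := by
  set S := t.filter (φ x < φ ·)
  have hS : ∀ z ∈ S, z ∈ t ∧ h z < h x ∧ φ x < φ z := fun z hz => by
    obtain ⟨hzt, hzφ⟩ := Finset.mem_filter.1 hz
    exact ⟨hzt, hh z hzt (by rintro rfl; exact hzφ.false), hzφ⟩
  obtain ⟨y, hyS, hymin⟩ := S.exists_min_image (fun z => (h x - h z) / (φ z - φ x))
    (by simpa [S, Finset.filter_nonempty_iff] using hφ)
  obtain ⟨hyt, hyh, hyφ⟩ := hS y hyS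
  refine ⟨(h x - h y) / (φ y - φ x), div_pos (by linarith) (by linarith), fun z hz => ?_,
    y, hyt, ?_, hyφ⟩
  · by_cases hzφ : φ x < φ z
    · have hmin := hymin z (Finset.mem_filter.2 ⟨hz, hzφ⟩)
      rw [le_div_iff₀ (by linarith)] at hmin
      linarith
    · have hzh : h z ≤ h x := by
        rcases eq_or_ne z x with rfl | hzx
        exacts [le_rfl, (hh z hz hzx).le]
      nlinarith [div_pos (sub_pos.2 hyh) (sub_pos.2 hyφ)]
  · linear_combination div_mul_cancel₀ (h x - h y) (sub_pos.2 hyφ).ne'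

/-- Points of `t` are determined by their `h`-value, since functionals separate points; so `t` lies
on the segment from `x` to its `h`-minimal point. -/
theorem convexHull_eq_segment_of_forall_affine {t : Finset V} {x : V} {h : V →L[ℝ] ℝ}
    (hxt : x ∈ t) (hh : ∀ z ∈ t, z ≠ x → h z < h x) (hne : ∃ z ∈ t, z ≠ x)
    (haff : ∀ φ : V →L[ℝ] ℝ, ∃ a b : ℝ, ∀ z ∈ t, φ z = a + b * h z) :
    ∃ y ∈ t, y ≠ x ∧ convexHull ℝ ↑t = segment ℝ x y := by
  obtain ⟨y, hyt, hymin⟩ := t.exists_min_image h ⟨x, hxt⟩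
  obtain ⟨z₀, hz₀t, hz₀x⟩ := hne
  have hyx : h y < h x := (hymin z₀ hz₀t).trans_lt (hh z₀ hz₀t hz₀x)
  refine ⟨y, hyt, by rintro rfl; exact hyx.false, ?_⟩
  refine (convexHull_min (fun z hz => ?_) (convex_segment x y)).antisymm
    (segment_subset_convexHull (Finset.mem_coe.2 hxt) (Finset.mem_coe.2 hyt))
  have hzx : h z ≤ h x := by
    rcases eq_or_ne z x with rfl | hzx
    exacts [le_rfl, (hh z hz hzx).le]
  set θ := (h x - h z) / (h x - h y)
  have hθ : θ * (h x - h y) = h x - h z := div_mul_cancel₀ _ (sub_pos.2 hyx).ne'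
  rw [segment_eq_image_lineMap]
  refine ⟨θ, ⟨div_nonneg (by linarith) (by linarith),
    (div_le_one (by linarith)).2 (by linarith [hymin z hz])⟩, ?_⟩
  refine (SeparatingDual.eq_iff_forall_dual_eq (R := ℝ)).2 fun φ => ?_
  obtain ⟨a, b, hab⟩ := haff φ
  rw [ContinuousLinearMap.map_lineMap, hab x hxt, hab y hyt, hab z hz]
  linear_combination (-b) * hθ

/-- Tilting the functional that exposes `x` towards `ℓ` (or, if that tilt is constant on `t`,
towards a functional not affine in it) gives a smaller face containing `x` and a point above it;
if there is no such functional, `t` is collinear. -/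
theorem exists_isEdge_lt (ℓ : V →L[ℝ] ℝ) (t : Finset V) {x : V}
    (hx : IsVertex (convexHull ℝ ↑t) x) (hlt : ∃ z ∈ t, ℓ x < ℓ z) :
    ∃ y ∈ t, IsEdge (convexHull ℝ ↑t) x y ∧ ℓ x < ℓ y := by
  induction t using Finset.strongInduction with
  | H t ih =>
  obtain ⟨hxt, h, hh⟩ := isVertex_convexHull_iff.1 hx
  have descend : ∀ (c : ℝ) (φ : V →L[ℝ] ℝ), (∀ z ∈ t, h z + c * φ z ≤ h x + c * φ x) →
      (∃ z ∈ t, h z + c * φ z ≠ h x + c * φ x) →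
      (∃ z ∈ t, h z + c * φ z = h x + c * φ x ∧ ℓ x < ℓ z) →
      ∃ y ∈ t, IsEdge (convexHull ℝ ↑t) x y ∧ ℓ x < ℓ y := by
    intro c φ hle ⟨w, hwt, hw⟩ ⟨z, hzt, hz, hzℓ⟩
    set f : V →L[ℝ] ℝ := h + c • φ
    have hf : ∀ v, f v = h v + c * φ v := fun v => by simp [f]
    simp only [← hf] at hle hw hz
    have hxT : x ∈ t.filter (f · = f x) := Finset.mem_filter.2 ⟨hxt, rfl⟩
    have hface := isFace_convexHull_filter hle ⟨x, hxt, rfl⟩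
    have hxT' : IsVertex (convexHull ℝ ↑(t.filter (f · = f x))) x :=
      ⟨singleton_nonempty x, hx.2.mono hface.2.subset
        (singleton_subset_iff.2 (subset_convexHull ℝ _ hxT))⟩
    obtain ⟨y, hyT, ⟨hxy, hedge⟩, hy⟩ := ih _ (Finset.filter_ssubset.2 ⟨w, hwt, hw⟩) hxT'
      ⟨z, Finset.mem_filter.2 ⟨hzt, hz⟩, hzℓ⟩
    exact ⟨y, Finset.mem_of_mem_filter y hyT, ⟨hxy, hface.trans hedge⟩, hy⟩
  obtain ⟨c, hc, hle, hz⟩ := exists_tilt hh hlt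
  by_cases hT : ∃ z ∈ t, h z + c * ℓ z ≠ h x + c * ℓ x
  · exact descend c ℓ hle hT hz
  push Not at hT
  have hup : ∀ z ∈ t, z ≠ x → ℓ x < ℓ z := fun z hz hzx => by
    have := hh z hz hzx
    nlinarith [hT z hz]
  obtain ⟨z, hzt, -, hzℓ⟩ := hz
  have hzx : z ≠ x := by rintro rfl; exact hzℓ.false
  by_cases haff : ∀ φ : V →L[ℝ] ℝ, ∃ a b : ℝ, ∀ z ∈ t, φ z = a + b * h z
  · obtain ⟨y, hyt, hyx, hseg⟩ :=
      convexHull_eq_segment_of_forall_affine hxt hh ⟨z, hzt, hzx⟩ haff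
    refine ⟨y, hyt, ⟨hyx.symm, ?_⟩, hup y hyt hyx⟩
    rw [← hseg]
    exact ⟨⟨x, subset_convexHull ℝ _ hxt⟩, IsExposed.refl _⟩
  push Not at haff
  obtain ⟨φ, hφ, hφup⟩ : ∃ φ : V →L[ℝ] ℝ,
      (∀ a b : ℝ, ∃ z ∈ t, φ z ≠ a + b * h z) ∧ ∃ z ∈ t, φ x < φ z := by
    obtain ⟨φ, hφ⟩ := haff
    by_cases hup : ∃ z ∈ t, φ x < φ z
    · exact ⟨φ, hφ, hup⟩
    refine ⟨-φ, fun a b => ?_, ?_⟩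
    · obtain ⟨z, hzt, hz⟩ := hφ (-a) (-b)
      exact ⟨z, hzt, fun h' => hz (by simp only [neg_apply] at h'; linarith)⟩
    · by_contra hdown
      push Not at hup hdown
      obtain ⟨z, hzt, hz⟩ := hφ (φ x) 0
      exact hz (by simp only [neg_apply, neg_le_neg_iff] at hdown
                   linarith [hup z hzt, hdown z hzt])
  obtain ⟨c', hc', hle', z', hz't, hz', hz'φ⟩ := exists_tilt hh hφup
  refine descend c' φ hle' ?_ ⟨z', hz't, hz', hup z' hz't (by rintro rfl; exact hz'φ.false)⟩
  obtain ⟨w, hwt, hw⟩ := hφ ((h x + c' * φ x) / c') (-1 / c')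
  refine ⟨w, hwt, fun heq => hw ?_⟩
  field_simp
  linarith

theorem IsFace.exists_isEdge_subset {t : Finset V} {G : Set V} (hG : IsFace (convexHull ℝ ↑t) G)
    {x y : V} (hx : x ∈ G) (hy : y ∈ G) (hxy : x ≠ y) :
    ∃ a b, IsEdge (convexHull ℝ ↑t) a b ∧ segment ℝ a b ⊆ G := by
  obtain ⟨tG, -, rfl⟩ := hG.exists_subset_eq_convexHull
  obtain ⟨t', -, hhull, hvert⟩ := exists_subset_forall_isVertex_convexHull_eq tG
  rw [← hhull] at hx hy
  obtain ⟨a, ha⟩ := convexHull_nonempty_iff.1 ⟨x, hx⟩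
  obtain ⟨w, hw, haw⟩ : ∃ w ∈ convexHull ℝ (t' : Set V), a ≠ w := by
    rcases eq_or_ne a x with rfl | hax
    exacts [⟨y, hy, hxy⟩, ⟨x, hx, hax⟩]
  obtain ⟨φ, hφ⟩ := SeparatingDual.exists_lt_of_ne haw
  obtain ⟨b, -, ⟨hab, hseg⟩, -⟩ := exists_isEdge_lt φ t' (by rw [hhull]; exact hvert a ha)
    (exists_mem_lt_of_mem_convexHull hw hφ)
  rw [hhull] at hseg
  exact ⟨a, b, ⟨hab, hG.trans hseg⟩, hseg.2.subset⟩

/-- Otherwise the face of `G` where `ℓ` is maximal contains two points, hence an edge, on which `ℓ`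
is constant. -/
theorem NonconstOnEdges.eq_of_maxAt {t : Finset V} {ℓ : V →L[ℝ] ℝ}
    (hℓ : NonconstOnEdges (convexHull ℝ ↑t) ℓ) {G : Set V} (hG : IsFace (convexHull ℝ ↑t) G)
    {u x : V} (hu : MaxAt ℓ G u) (hx : x ∈ G) (hxu : ℓ x = ℓ u) : x = u := by
  by_contra hne
  have hGℓ : IsFace G (ℓ.toExposed G) := ⟨⟨u, hu⟩, ContinuousLinearMap.toExposed.isExposed⟩
  obtain ⟨a, b, hab, hseg⟩ := (hG.trans hGℓ).exists_isEdge_subset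
    ⟨hx, fun z hz => hxu ▸ hu.2 z hz⟩ hu hne
  have hℓseg : ∀ z ∈ segment ℝ a b, ℓ z = ℓ u := fun z hz =>
    le_antisymm (hu.2 z (hseg hz).1) ((hseg hz).2 u hu.1)
  exact hℓ a b hab
    ((hℓseg a (left_mem_segment ℝ a b)).trans (hℓseg b (right_mem_segment ℝ a b)).symm)

def NoIncomingEdge (P : Set V) (ℓ : V →L[ℝ] ℝ) (F : Set V) : Prop :=
  ¬ ∃ u u' : V, DirEdge P ℓ u u' ∧ u' ∈ F ∧ u ∉ F

theorem subset_of_maxAt_mem {t : Finset V} {ℓ : V →L[ℝ] ℝ}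
    (hℓ : NonconstOnEdges (convexHull ℝ ↑t) ℓ) {F G : Set V} (hF : IsFace (convexHull ℝ ↑t) F)
    (hnoinc : NoIncomingEdge (convexHull ℝ ↑t) ℓ F) (hG : IsFace (convexHull ℝ ↑t) G) {u : V}
    (hu : MaxAt ℓ G u) (huF : u ∈ F) : G ⊆ F := by
  classical
  obtain ⟨tG, -, rfl⟩ := hG.exists_subset_eq_convexHull
  obtain ⟨t', -, hhull, hvert⟩ := exists_subset_forall_isVertex_convexHull_eq tG
  rw [← hhull] at hG hu ⊢
  refine convexHull_min (fun x₀ hx₀ => by_contra fun hx₀F => ?_)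
    (hF.2.convex (convex_convexHull ℝ _))
  obtain ⟨x, hx, hmax⟩ := (t'.filter (· ∉ F)).exists_max_image ℓ
    ⟨x₀, Finset.mem_filter.2 ⟨hx₀, hx₀F⟩⟩
  obtain ⟨hxt, hxF⟩ := Finset.mem_filter.1 hx
  have hxG : x ∈ convexHull ℝ (t' : Set V) := subset_convexHull ℝ _ hxt
  have hxu : ℓ x < ℓ u := (hu.2 x hxG).lt_of_ne fun h => hxF (hℓ.eq_of_maxAt hG hu hxG h ▸ huF)
  obtain ⟨y, hyt, ⟨hxy, hedge⟩, hℓxy⟩ := exists_isEdge_lt ℓ t' (by rw [hhull]; exact hvert x hxt)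
    (exists_mem_lt_of_mem_convexHull hu.1 hxu)
  have hyF : y ∈ F := by_contra fun hyF => (hmax y (Finset.mem_filter.2 ⟨hyt, hyF⟩)).not_gt hℓxy
  exact hnoinc ⟨x, y, ⟨⟨hxy, hG.trans hedge⟩, hℓxy⟩, hyF, hxF⟩

theorem IsExtreme.subset_of_mem_intrinsicInterior {Q F G : Set V} (hF : IsExtreme ℝ Q F)
    (hGQ : G ⊆ Q) {p : V} (hp : p ∈ intrinsicInterior ℝ G) (hpF : p ∈ F) : G ⊆ F := by
  intro q hq
  obtain ⟨p', hp', rfl⟩ := mem_intrinsicInterior.1 hp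
  -- within the affine span, the ray from `q` through `p` stays in `G` a little beyond `p`
  set γ : ℝ → affineSpan ℝ G := fun θ =>
    ⟨AffineMap.lineMap q p' θ, AffineMap.lineMap_mem θ (subset_affineSpan ℝ G hq) p'.2⟩
  have hγ : Continuous γ := AffineMap.lineMap_continuous.subtype_mk _
  have hγ1 : γ 1 = p' := Subtype.ext (AffineMap.lineMap_apply_one _ _)
  obtain ⟨θ, hθG, hθ⟩ : ∃ θ : ℝ, γ θ ∈ interior (((↑) : affineSpan ℝ G → V) ⁻¹' G) ∧ 1 < θ :=
    (((hγ.tendsto 1).eventually (isOpen_interior.mem_nhds (hγ1 ▸ hp'))).filter_mono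
      nhdsWithin_le_nhds |>.and self_mem_nhdsWithin).exists (f := nhdsWithin 1 (Ioi 1))
  have hr : AffineMap.lineMap q (p' : V) θ ∈ G :=
    interior_subset (s := ((↑) : affineSpan ℝ G → V) ⁻¹' G) hθG
  refine hF.left_mem_of_mem_openSegment (hGQ hq) (hGQ hr) hpF
    ⟨1 - θ⁻¹, θ⁻¹, sub_pos.2 (inv_lt_one_of_one_lt₀ hθ), by positivity, by ring, ?_⟩
  rw [AffineMap.lineMap_apply_module]
  match_scalars <;> field_simp
  ring

theorem openSegment_subset_intrinsicInterior_segment {a b : V} (hab : a ≠ b) :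
    openSegment ℝ a b ⊆ intrinsicInterior ℝ (segment ℝ a b) := by
  obtain ⟨φ, hφ⟩ := SeparatingDual.exists_lt_of_ne hab
  intro p hp
  refine ⟨⟨p, subset_affineSpan ℝ _ (openSegment_subset_segment ℝ a b hp)⟩,
    mem_interior.2 ⟨{z | φ a < φ z ∧ φ z < φ b}, ?_, ?_, ?_⟩, rfl⟩
  · rintro ⟨z, hz⟩ ⟨hza, hzb⟩
    rw [← convexHull_pair, affineSpan_convexHull] at hz
    obtain ⟨θ, rfl⟩ := mem_affineSpan_pair_iff_exists_lineMap_eq.1 hz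
    simp only [ContinuousLinearMap.map_lineMap] at hza hzb
    show AffineMap.lineMap a b θ ∈ segment ℝ a b
    rw [segment_eq_image_lineMap]
    exact ⟨θ, ⟨by nlinarith, by nlinarith⟩, rfl⟩
  · exact (isOpen_lt continuous_const (φ.continuous.comp continuous_subtype_val)).inter
      (isOpen_lt (φ.continuous.comp continuous_subtype_val) continuous_const)
  · rw [openSegment_eq_image_lineMap] at hp
    obtain ⟨θ, ⟨hθ0, hθ1⟩, rfl⟩ := hp
    constructor <;> simp only [ContinuousLinearMap.map_lineMap] <;> nlinarith

theorem isVertex_segment_right {ℓ : V →L[ℝ] ℝ} {a b : V} (hlt : ℓ a < ℓ b) :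
    IsVertex (segment ℝ a b) b := by
  classical
  rw [← convexHull_pair, ← Finset.coe_pair]
  refine isVertex_convexHull_iff.2 ⟨by simp, ℓ, fun z hz hzb => ?_⟩
  obtain rfl : z = a := by simpa [hzb] using hz
  exact hlt

theorem StratNeg.noIncomingEdge {t : Finset V} {ℓ : V →L[ℝ] ℝ}
    (h : StratNeg (convexHull ℝ ↑t) ℓ) {v : V} (hv : IsVertex (convexHull ℝ ↑t) v) :
    NoIncomingEdge (convexHull ℝ ↑t) ℓ (Fneg (convexHull ℝ ↑t) ℓ v) := by
  rintro ⟨u, u', ⟨⟨huu', hedge⟩, hlt⟩, hu'F, huF⟩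
  have hu' : IsVertex (convexHull ℝ ↑t) u' := hedge.trans (isVertex_segment_right hlt)
  have hmax : MaxAt ℓ (segment ℝ u u') u' := by
    refine ⟨right_mem_segment ℝ u u', fun z hz => ?_⟩
    rw [← convexHull_pair] at hz
    exact map_le_of_mem_convexHull (by rintro _ (rfl | rfl); exacts [hlt.le, le_rfl]) hz
  have hu'O : u' ∈ Oneg (convexHull ℝ ↑t) ℓ u' :=
    mem_biUnion (show IsFace _ {u'} ∧ MaxAt ℓ {u'} u' from ⟨hu', rfl, fun z hz => hz ▸ le_rfl⟩)
      (by rw [intrinsicInterior_singleton]; rfl)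
  have hO : openSegment ℝ u u' ⊆ Oneg (convexHull ℝ ↑t) ℓ u' := fun p hp =>
    mem_biUnion (show IsFace _ (segment ℝ u u') ∧ _ from ⟨hedge, hmax⟩)
      (openSegment_subset_intrinsicInterior_segment huu' hp)
  exact huF (closure_minimal (hO.trans (h u' v hu' hv ⟨u', hu'O, hu'F⟩)) isClosed_closure
    (segment_subset_closure_openSegment (left_mem_segment ℝ u u')))

theorem stratNeg_of_noIncomingEdge {t : Finset V} {ℓ : V →L[ℝ] ℝ}
    (hℓ : NonconstOnEdges (convexHull ℝ ↑t) ℓ)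
    (hface : ∀ v, IsVertex (convexHull ℝ ↑t) v →
      IsFace (convexHull ℝ ↑t) (Fneg (convexHull ℝ ↑t) ℓ v))
    (hnoinc : ∀ v, IsVertex (convexHull ℝ ↑t) v →
      NoIncomingEdge (convexHull ℝ ↑t) ℓ (Fneg (convexHull ℝ ↑t) ℓ v)) :
    StratNeg (convexHull ℝ ↑t) ℓ := by
  rintro u w - hw ⟨p, hpO, hpF⟩ x hx
  obtain ⟨G₀, ⟨hG₀, hG₀u⟩, hpG₀⟩ := mem_iUnion₂.1 hpO
  obtain ⟨G, ⟨hG, hGu⟩, hxG⟩ := mem_iUnion₂.1 hx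
  have huF : u ∈ Fneg (convexHull ℝ ↑t) ℓ w :=
    (hface w hw).2.isExtreme.subset_of_mem_intrinsicInterior hG₀.2.subset hpG₀ hpF hG₀u.1
  exact subset_of_maxAt_mem hℓ (hface w hw) (hnoinc w hw) hG hGu huF (intrinsicInterior_subset hxG)

/-- Under the Irreducibility Assumption (each `F⁻(v)` and `F⁺(v)` is
a face of `P`), `O⁻` is a stratification iff for every vertex `v` the face `F⁻(v)`
has no incoming directed edges. -/
theorem stmt17 (P : Set V) (hP : IsPolytope P) (ℓ : V →L[ℝ] ℝ)
    (hℓ : NonconstOnEdges P ℓ)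
    (hirr : ∀ v, IsVertex P v → IsFace P (Fneg P ℓ v) ∧ IsFace P (Fpos P ℓ v)) :
    StratNeg P ℓ ↔
      ∀ v, IsVertex P v →
        ¬ ∃ u u' : V, DirEdge P ℓ u u' ∧ u' ∈ Fneg P ℓ v ∧ u ∉ Fneg P ℓ v := by
  obtain ⟨s, -, rfl⟩ := hP
  exact ⟨fun h v hv => h.noIncomingEdge hv,
    stratNeg_of_noIncomingEdge hℓ fun v hv => (hirr v hv).1⟩
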